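/- arXiv:math/9909014 — 3 statements merged into one kernel-verified Lean document; each statement's English description precedes it below -/
import Mathlib

section
/- For all indices 1 ≤ i < j ≤ n, the quantity Φ_{ij} defined by the recursion satisfies the linear system Φ_{ij} · (q^{y_j − y_i + 2} − 1) = q_l^{i−j+1} (q − q^{−1}) + (q^2 − 1)(q_l − 1) · Σ_{k : i < k < j} q_l^{i−k} Φ_{kj}. -/
/-!
Because `(q² - 1)(q_l - 1) = 1 - q^{-2l}`, the numerator `q^{y_j - y_{i+1} + 2} - q^{-2l}` of the
recursion equals `(q^{y_j - y_{i+1} + 2} - 1) + (q² - 1)(q_l - 1)`. Hence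
`a_i = Φ_{ij}(q^{y_j - y_i + 2} - 1)` obeys the first-order linear recurrence
`a_i = q_l⁻¹ (a_{i+1} + (q² - 1)(q_l - 1) Φ_{i+1,j})` with `a_{j-1} = q - q⁻¹`,
and unrolling it down from `j - 1` gives the system.
-/

/-- The symmetric q-integer `[m] = (q^m - q^{-m})/(q - q⁻¹)` (real powers). -/
noncomputable def qint (q : ℝ) (m : ℤ) : ℝ :=
  (q ^ (m : ℝ) - q ^ (-(m : ℝ))) / (q - q⁻¹)

/-- The coefficients `Φ_{ij}` defined by the downward recursion
`Φ_{j-1,j} = (q - q⁻¹)/(q^{y_j - y_{j-1} + 2} - 1)` and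
`Φ_{ij} = Φ_{i+1,j} · q_l⁻¹ · (q^{y_j - y_{i+1} + 2} - q^{-2l})/(q^{y_j - y_i + 2} - 1)`. -/
noncomputable def Phi (q ql : ℝ) (l : ℕ) (y : ℕ → ℝ) (i j : ℕ) : ℝ :=
  if i + 1 < j then
    Phi q ql l y (i + 1) j * ql⁻¹ *
      (q ^ (y j - y (i + 1) + 2) - q ^ (-(2 * (l : ℝ)))) / (q ^ (y j - y i + 2) - 1)
  else (q - q⁻¹) / (q ^ (y j - y i + 2) - 1)
termination_by j - i
decreasing_by omega

open Finset

theorem eq_zpow_mul_add_sum_Ioo_of_recurrence {K : Type*} [Field K] {r c b : K} (hr : r ≠ 0)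
    {a φ : ℕ → K} {i j : ℕ} (hij : i < j)
    (hstep : ∀ k, i ≤ k → k + 1 < j → a k = r⁻¹ * (a (k + 1) + c * φ (k + 1)))
    (hlast : a (j - 1) = b) :
    a i = r ^ ((i : ℤ) - j + 1) * b + c * ∑ k ∈ Ioo i j, r ^ ((i : ℤ) - k) * φ k := by
  obtain hj | hij' : i + 1 = j ∨ i + 1 < j := by omega
  · subst hj
    simp [← hlast, ← Ico_add_one_left_eq_Ioo]
  have ih := eq_zpow_mul_add_sum_Ioo_of_recurrence hr hij'
    (fun k hk hkj => hstep k (by omega) hkj) hlast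
  have hshift (m : ℤ) : r ^ ((i : ℤ) - m) = r⁻¹ * r ^ (((i + 1 : ℕ) : ℤ) - m) := by
    rw [← zpow_neg_one, ← zpow_add₀ hr]
    push_cast
    ring_nf
  have hshift' : r ^ ((i : ℤ) - j + 1) = r⁻¹ * r ^ (((i + 1 : ℕ) : ℤ) - j + 1) := by
    rw [← zpow_neg_one, ← zpow_add₀ hr]
    push_cast
    ring_nf
  rw [← Ico_add_one_left_eq_Ioo i j, sum_eq_sum_Ico_succ_bot hij', Ico_add_one_left_eq_Ioo,
    hstep i le_rfl hij', ih, hshift']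
  simp only [hshift, sub_self, zpow_zero, mul_one, mul_assoc, ← mul_sum]
  ring
termination_by j - i

namespace Real

variable {q : ℝ}

theorem rpow_eq_one_iff_of_pos_of_ne_one (hq : 0 < q) (hq1 : q ≠ 1) {x : ℝ} :
    q ^ x = 1 ↔ x = 0 := by
  rw [← rpow_right_inj hq hq1 (y := x) (z := 0), rpow_zero]

theorem rpow_sub_rpow_neg_ne_zero (hq : 0 < q) (hq1 : q ≠ 1) {x : ℝ} (hx : x ≠ 0) :
    q ^ x - q ^ (-x) ≠ 0 := by
  rw [sub_ne_zero, Ne, rpow_right_inj hq hq1]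
  contrapose! hx
  linarith

theorem sub_inv_ne_zero_of_pos_of_ne_one (hq : 0 < q) (hq1 : q ≠ 1) : q - q⁻¹ ≠ 0 := by
  simpa [rpow_neg_one] using rpow_sub_rpow_neg_ne_zero hq hq1 one_ne_zero

end Real

open Real

theorem qint_ne_zero {q : ℝ} (hq : 0 < q) (hq1 : q ≠ 1) {m : ℤ} (hm : m ≠ 0) :
    qint q m ≠ 0 :=
  div_ne_zero (rpow_sub_rpow_neg_ne_zero hq hq1 (by exact_mod_cast hm))
    (sub_inv_ne_zero_of_pos_of_ne_one hq hq1)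

theorem sq_sub_one_mul_qint_add_one_mul_rpow_neg_sub_one {q : ℝ} (hq : 0 < q) (hq1 : q ≠ 1)
    (m : ℤ) :
    (q ^ 2 - 1) * (qint q (m + 1) * q ^ (-(m : ℝ)) - 1) = 1 - q ^ (-(2 * (m : ℝ))) := by
  have hd := sub_inv_ne_zero_of_pos_of_ne_one hq hq1
  rw [qint, show -(2 * (m : ℝ)) = -m + -m by ring]
  push_cast
  rw [show -((m : ℝ) + 1) = -m + -1 by ring]
  simp only [rpow_add hq, rpow_neg hq.le, rpow_one]
  set u := q ^ (m : ℝ)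
  set Y := (u * q - u⁻¹ * q⁻¹) / (q - q⁻¹)
  have hY : Y * (q - q⁻¹) = u * q - u⁻¹ * q⁻¹ := div_mul_cancel₀ _ hd
  have hqq : q * q⁻¹ = 1 := mul_inv_cancel₀ hq.ne'
  have huu : u * u⁻¹ = 1 := mul_inv_cancel₀ (rpow_pos_of_pos hq _).ne'
  linear_combination (q * u⁻¹) * hY + (Y * u⁻¹ - u⁻¹ ^ 2) * hqq + q ^ 2 * huu

section Phi

variable {q ql : ℝ} {l : ℕ} {y : ℕ → ℝ} {i j : ℕ}

theorem Phi_mul_of_succ_lt (h : i + 1 < j) (hD : q ^ (y j - y i + 2) - 1 ≠ 0) :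
    Phi q ql l y i j * (q ^ (y j - y i + 2) - 1) =
      Phi q ql l y (i + 1) j * ql⁻¹ * (q ^ (y j - y (i + 1) + 2) - q ^ (-(2 * (l : ℝ)))) := by
  rw [Phi, if_pos h, div_mul_cancel₀ _ hD]

theorem Phi_mul_of_succ_eq (h : i + 1 = j) (hD : q ^ (y j - y i + 2) - 1 ≠ 0) :
    Phi q ql l y i j * (q ^ (y j - y i + 2) - 1) = q - q⁻¹ := by
  rw [Phi, if_neg (by omega), div_mul_cancel₀ _ hD]

end Phi

theorem Phi_linear_system_general (q : ℝ) (hq : 0 < q) (hq1 : q ≠ 1)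
    (l : ℕ) (n : ℕ) (y : ℕ → ℝ)
    (hy : ∀ i j, 1 ≤ i → i ≤ n → 1 ≤ j → j ≤ n → i ≠ j →
      y j - y i ≠ 0 ∧ y j - y i ≠ -2)
    (ql : ℝ) (hql : ql = qint q (l + 1) * q ^ (-(l : ℝ)))
    (i j : ℕ) (hi : 1 ≤ i) (hij : i < j) (hj : j ≤ n) :
    Phi q ql l y i j * (q ^ (y j - y i + 2) - 1) =
      ql ^ ((i : ℤ) - (j : ℤ) + 1) * (q - q⁻¹) +
        (q ^ 2 - 1) * (ql - 1) *
          ∑ k ∈ Finset.Ioo i j, ql ^ ((i : ℤ) - (k : ℤ)) * Phi q ql l y k j := by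
  have hD (k : ℕ) (hik : i ≤ k) (hkj : k < j) : q ^ (y j - y k + 2) - 1 ≠ 0 := by
    rw [sub_ne_zero, Ne, rpow_eq_one_iff_of_pos_of_ne_one hq hq1]
    have hy2 := (hy k j (by omega) (by omega) (by omega) hj (by omega)).2
    contrapose! hy2
    linarith
  have hc : (q ^ 2 - 1) * (ql - 1) = 1 - q ^ (-(2 * (l : ℝ))) := by
    have := sq_sub_one_mul_qint_add_one_mul_rpow_neg_sub_one hq hq1 l
    push_cast at this
    rwa [hql]
  have hql0 : ql ≠ 0 :=
    hql ▸ mul_ne_zero (qint_ne_zero hq hq1 (by omega)) (rpow_pos_of_pos hq _).ne'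
  refine eq_zpow_mul_add_sum_Ioo_of_recurrence
    (a := fun k ↦ Phi q ql l y k j * (q ^ (y j - y k + 2) - 1)) hql0 hij (fun k hik hkj ↦ ?_)
    (Phi_mul_of_succ_eq (by omega) (hD _ (by omega) (by omega)))
  rw [Phi_mul_of_succ_lt hkj (hD k hik (by omega))]
  linear_combination -(ql⁻¹ * Phi q ql l y (k + 1) j) * hc

/-- the `Φ_{ij}` satisfy the linear system
`Φ_{ij}(q^{y_j-y_i+2} - 1) = q_l^{i-j+1}(q - q⁻¹) + (q² - 1)(q_l - 1) Σ_{i<k<j} q_l^{i-k} Φ_{kj}`. -/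
theorem Phi_linear_system (q : ℝ) (hq : 0 < q) (hq1 : q ≠ 1)
    (l : ℕ) (hl : 0 < l) (n : ℕ) (hn : 2 ≤ n) (y : ℕ → ℝ)
    (hy : ∀ i j, 1 ≤ i → i ≤ n → 1 ≤ j → j ≤ n → i ≠ j →
      y j - y i ≠ 0 ∧ y j - y i ≠ -2)
    (ql : ℝ) (hql : ql = qint q (l + 1) * q ^ (-(l : ℝ)))
    (i j : ℕ) (hi : 1 ≤ i) (hij : i < j) (hj : j ≤ n) :
    Phi q ql l y i j * (q ^ (y j - y i + 2) - 1) =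
      ql ^ ((i : ℤ) - (j : ℤ) + 1) * (q - q⁻¹) +
        (q ^ 2 - 1) * (ql - 1) *
          ∑ k ∈ Finset.Ioo i j, ql ^ ((i : ℤ) - (k : ℤ)) * Phi q ql l y k j :=
  Phi_linear_system_general q hq hq1 l n y hy ql hql i j hi hij hj
end

section
/- For all indices 1 ≤ i < j ≤ n, the quantity Ψ_{ij} defined by the recursion satisfies the linear system Ψ_{ij} · (1 − q^{y_j − y_i}) = (q − q^{−1}) (q^l [l]^{−1})^{j−i−1} + (q − q^{−1}) · Σ_{k : i < k < j} Ψ_{kj} · q^{y_j − y_k} · (q^l [l]^{−1})^{k−i−1}. -/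
/-- The coefficients `Ψ_{ij}` defined by the downward recursion
`Ψ_{j-1,j} = (q - q⁻¹)/(1 - q^{y_j - y_{j-1}})` and
`Ψ_{ij} = q^{-l}[l]⁻¹ · (q^{y_j - y_{i+1}} - q^{2l})/(q^{y_j - y_i} - 1) · Ψ_{i+1,j}`. -/
noncomputable def Psi (q : ℝ) (l : ℕ) (y : ℕ → ℝ) (i j : ℕ) : ℝ :=
  if i + 1 < j then
    q ^ (-(l : ℝ)) * (qint q l)⁻¹ *
      (q ^ (y j - y (i + 1)) - q ^ (2 * (l : ℝ))) / (q ^ (y j - y i) - 1) *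
      Psi q l y (i + 1) j
  else (q - q⁻¹) / (1 - q ^ (y j - y i))
termination_by j - i
decreasing_by omega

/-- the `Ψ_{ij}` satisfy the linear system
`Ψ_{ij}(1 - q^{y_j-y_i}) = (q - q⁻¹)(q^l [l]⁻¹)^{j-i-1}
  + (q - q⁻¹) Σ_{i<k<j} Ψ_{kj} q^{y_j-y_k} (q^l [l]⁻¹)^{k-i-1}`. -/
theorem Psi_linear_system (q : ℝ) (hq : 0 < q) (hq1 : q ≠ 1)
    (l : ℕ) (hl : 0 < l) (n : ℕ) (hn : 2 ≤ n) (y : ℕ → ℝ)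
    (hy : ∀ i j, 1 ≤ i → i ≤ n → 1 ≤ j → j ≤ n → i ≠ j →
      y j - y i ≠ 0 ∧ y j - y i ≠ -2)
    (i j : ℕ) (hi : 1 ≤ i) (hij : i < j) (hj : j ≤ n) :
    Psi q l y i j * (1 - q ^ (y j - y i)) =
      (q - q⁻¹) * (q ^ (l : ℝ) * (qint q l)⁻¹) ^ (j - i - 1) +
        (q - q⁻¹) *
          ∑ k ∈ Finset.Ioo i j,
            Psi q l y k j * q ^ (y j - y k) * (q ^ (l : ℝ) * (qint q l)⁻¹) ^ (k - i - 1) := by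
  have hlog : Real.log q ≠ 0 := fun h =>
    hq1 (by rw [← Real.exp_log hq, h, Real.exp_zero])
  have hne : ∀ a b : ℝ, a ≠ b → q ^ a ≠ q ^ b := by
    intro a b hab h
    rw [Real.rpow_def_of_pos hq, Real.rpow_def_of_pos hq] at h
    exact hab (mul_left_cancel₀ hlog (Real.exp_injective h))
  have hrone : ∀ a : ℝ, a ≠ 0 → q ^ a ≠ 1 := by
    intro a ha
    have := hne a 0 ha
    simpa using this
  have hc : q - q⁻¹ ≠ 0 := by
    intro h
    have hq2 : q * q = 1 := by
      field_simp at h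
      nlinarith [h]
    have : (q - 1) * (q + 1) = 0 := by nlinarith
    rcases mul_eq_zero.1 this with h1 | h1
    · exact hq1 (by linarith)
    · nlinarith
  have hll : q ^ (l : ℝ) - q ^ (-(l : ℝ)) ≠ 0 := by
    apply sub_ne_zero.2
    apply hne
    have : (0:ℝ) < (l:ℝ) := by exact_mod_cast hl
    linarith
  have hqint : qint q l ≠ 0 := by
    unfold qint
    push_cast
    exact div_ne_zero hll hc
  have h2 : q - q⁻¹ = (q ^ (l : ℝ) - q ^ (-(l : ℝ))) * (qint q l)⁻¹ := by
    unfold qint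
    push_cast
    field_simp
  have h1 : q ^ (-(l : ℝ)) * q ^ (2 * (l : ℝ)) = q ^ (l : ℝ) := by
    rw [← Real.rpow_add hq]
    congr 1
    ring
  have main : ∀ d i, 1 ≤ i → i < j → j ≤ n → j - i = d →
      Psi q l y i j * (1 - q ^ (y j - y i)) =
        (q - q⁻¹) * (q ^ (l : ℝ) * (qint q l)⁻¹) ^ (j - i - 1) +
          (q - q⁻¹) *
            ∑ k ∈ Finset.Ioo i j,
              Psi q l y k j * q ^ (y j - y k) * (q ^ (l : ℝ) * (qint q l)⁻¹) ^ (k - i - 1) := by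
    intro d
    induction d using Nat.strong_induction_on with
    | _ d IH =>
      intro i hi hij hj hd
      have hj1 : 1 ≤ j := by omega
      have hyij : y j - y i ≠ 0 := (hy i j hi (by omega) hj1 hj (by omega)).1
      have hQi : q ^ (y j - y i) ≠ 1 := hrone _ hyij
      by_cases h : i + 1 < j
      · -- inductive case
        have hy1 : y j - y (i+1) ≠ 0 := (hy (i+1) j (by omega) (by omega) hj1 hj (by omega)).1
        have hQ1 : q ^ (y j - y (i+1)) ≠ 1 := hrone _ hy1
        have hih := IH (j - (i+1)) (by omega) (i+1) (by omega) h hj rfl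
        set A := q ^ (l : ℝ) * (qint q l)⁻¹ with hA
        set Q1 := q ^ (y j - y (i+1)) with hQ1d
        set Qi := q ^ (y j - y i) with hQid
        set P1 := Psi q l y (i+1) j with hP1
        set S := ∑ k ∈ Finset.Ioo (i+1) j,
            Psi q l y k j * q ^ (y j - y k) * A ^ (k - (i+1) - 1) with hS
        -- rewrite the sum over Ioo i j
        have hsplit : Finset.Ioo i j = insert (i+1) (Finset.Ioo (i+1) j) := by
          ext k; simp [Finset.mem_Ioo]; omega
        have hnotmem : (i+1) ∉ Finset.Ioo (i+1) j := by simp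
        have hsum : ∑ k ∈ Finset.Ioo i j,
            Psi q l y k j * q ^ (y j - y k) * A ^ (k - i - 1)
            = P1 * Q1 + S * A := by
          rw [hsplit, Finset.sum_insert hnotmem]
          congr 1
          · simp [hP1, hQ1d]
          · rw [hS, Finset.sum_mul]
            apply Finset.sum_congr rfl
            intro k hk
            simp only [Finset.mem_Ioo] at hk
            have hk1 : k - i - 1 = (k - (i+1) - 1) + 1 := by omega
            rw [hk1, pow_succ]
            ring
        have hpow : (j - i - 1) = (j - (i+1) - 1) + 1 := by omega
        rw [hsum, hpow, pow_succ]
        -- unfold Psi at i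
        rw [Psi, if_pos h]
        rw [← hP1, ← hQ1d, ← hQid]
        have hQiz : Qi - 1 ≠ 0 := sub_ne_zero.2 hQi
        have hlhs : q ^ (-(l:ℝ)) * (qint q l)⁻¹ * (Q1 - q ^ (2 * (l:ℝ))) / (Qi - 1) * P1 * (1 - Qi)
            = -(q ^ (-(l:ℝ)) * (qint q l)⁻¹ * (Q1 - q ^ (2 * (l:ℝ)))) * P1 := by
          field_simp
          ring
        rw [hlhs]
        -- use the induction hypothesis
        have hih' : (q - q⁻¹) * A ^ (j - (i+1) - 1) + (q - q⁻¹) * S = P1 * (1 - Q1) := by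
          rw [← hih]
        linear_combination (-A) * hih' + (qint q l)⁻¹ * P1 * h1 - P1 * Q1 * h2
      · -- base case: j = i + 1
        have hji : j = i + 1 := by omega
        have hempty : Finset.Ioo i j = ∅ := by
          ext k; simp [Finset.mem_Ioo]; omega
        have hd1 : j - i - 1 = 0 := by omega
        rw [Psi, if_neg h, hempty, hd1]
        have h1m : 1 - q ^ (y j - y i) ≠ 0 := sub_ne_zero.2 (Ne.symm hQi)
        rw [div_mul_cancel₀ _ h1m]
        simp
  exact main (j - i) i hi hij hj rfl
end

section
/- For all indices 1 ≤ i < j ≤ n, the recursion for Φ has the closed-form solution Φ_{ij} = (q − q^{−1}) · q_l^{−(j−i−1)} · ∏_{m=i+1}^{j−1} (q^{y_j − y_m + 2} − q^{−2l}) / ∏_{m=i}^{j−1} (q^{y_j − y_m + 2} − 1). -/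
lemma rpow_inj (q : ℝ) (hq : 0 < q) (hq1 : q ≠ 1) {a b : ℝ} (h : a ≠ b) :
    q ^ a ≠ q ^ b := by
  intro he
  have := congrArg Real.log he
  rw [Real.log_rpow hq, Real.log_rpow hq] at this
  exact h (mul_right_cancel₀ (Real.log_ne_zero_of_pos_of_ne_one hq hq1) this)

lemma ql_ne (q : ℝ) (hq : 0 < q) (hq1 : q ≠ 1) (l : ℕ) :
    qint q (l + 1) * q ^ (-(l : ℝ)) ≠ 0 := by
  have h1 : q - q⁻¹ ≠ 0 := by
    intro h
    have : q * q - 1 = 0 := by field_simp at h; nlinarith [h]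
    have : (q - 1) * (q + 1) = 0 := by ring_nf; linarith
    rcases mul_eq_zero.1 this with h' | h' <;> [exact hq1 (by linarith); linarith]
  have h2 : q ^ (((l : ℤ) + 1 : ℤ) : ℝ) - q ^ (-(((l : ℤ) + 1 : ℤ) : ℝ)) ≠ 0 := by
    apply sub_ne_zero.2
    apply rpow_inj q hq hq1
    push_cast
    intro h
    have h0 : (0:ℝ) ≤ (l:ℝ) := Nat.cast_nonneg l
    linarith
  apply mul_ne_zero
  · exact div_ne_zero h2 h1
  · exact (Real.rpow_pos_of_pos hq _).ne'

lemma key (q ql : ℝ) (hql0 : ql ≠ 0) (l : ℕ) (y : ℕ → ℝ) (j : ℕ) :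
    ∀ k i, i < j → j - i = k →
    Phi q ql l y i j =
      (q - q⁻¹) * ql ^ (-((j : ℤ) - (i : ℤ) - 1)) *
        (∏ m ∈ Finset.Ioo i j, (q ^ (y j - y m + 2) - q ^ (-(2 * (l : ℝ))))) /
          ∏ m ∈ Finset.Ico i j, (q ^ (y j - y m + 2) - 1) := by
  intro k
  induction k with
  | zero => intro i hij hk; omega
  | succ k ih =>
    intro i hij hk
    rw [Phi]
    by_cases h : i + 1 < j
    · rw [if_pos h, ih (i+1) h (by omega)]
      have e1 : (-((j : ℤ) - (i : ℤ) - 1)) = (-((j : ℤ) - ((i+1 : ℕ) : ℤ) - 1)) + (-1) := by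
        push_cast; ring
      rw [e1, zpow_add₀ hql0, zpow_neg_one]
      have hP : (∏ m ∈ Finset.Ioo i j, (q ^ (y j - y m + 2) - q ^ (-(2 * (l : ℝ))))) =
          (q ^ (y j - y (i+1) + 2) - q ^ (-(2 * (l : ℝ)))) *
            ∏ m ∈ Finset.Ioo (i+1) j, (q ^ (y j - y m + 2) - q ^ (-(2 * (l : ℝ)))) := by
        rw [← Finset.Ico_add_one_left_eq_Ioo, ← Finset.Ico_add_one_left_eq_Ioo, Finset.prod_eq_prod_Ico_succ_bot h]
      have hQ : (∏ m ∈ Finset.Ico i j, (q ^ (y j - y m + 2) - 1)) =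
          (q ^ (y j - y i + 2) - 1) * ∏ m ∈ Finset.Ico (i+1) j, (q ^ (y j - y m + 2) - 1) :=
        Finset.prod_eq_prod_Ico_succ_bot (by omega) _
      rw [hP, hQ]
      generalize (∏ m ∈ Finset.Ioo (i+1) j, (q ^ (y j - y m + 2) - q ^ (-(2 * (l : ℝ))))) = P
      generalize (∏ m ∈ Finset.Ico (i+1) j, (q ^ (y j - y m + 2) - 1)) = Q
      simp only [div_eq_mul_inv, mul_inv]
      ring
    · have hj1 : j = i + 1 := by omega
      rw [if_neg h]
      subst hj1
      have h0 : Finset.Ioo i (i+1) = ∅ := by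
        rw [← Finset.Ico_add_one_left_eq_Ioo]; exact Finset.Ico_self _
      simp [h0, Nat.Ico_succ_singleton, show -((i:ℤ) + 1 - (i:ℤ) - 1) = 0 by ring]

/-- the closed-form solution of the `Φ` recursion:
`Φ_{ij} = (q - q⁻¹) q_l^{-(j-i-1)} ∏_{i<m<j}(q^{y_j - y_m + 2} - q^{-2l})
            / ∏_{i≤m<j}(q^{y_j - y_m + 2} - 1)`. -/
theorem Phi_closed_form (q : ℝ) (hq : 0 < q) (hq1 : q ≠ 1)
    (l : ℕ) (hl : 0 < l) (n : ℕ) (hn : 2 ≤ n) (y : ℕ → ℝ)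
    (hy : ∀ i j, 1 ≤ i → i ≤ n → 1 ≤ j → j ≤ n → i ≠ j →
      y j - y i ≠ 0 ∧ y j - y i ≠ -2)
    (ql : ℝ) (hql : ql = qint q (l + 1) * q ^ (-(l : ℝ)))
    (i j : ℕ) (hi : 1 ≤ i) (hij : i < j) (hj : j ≤ n) :
    Phi q ql l y i j =
      (q - q⁻¹) * ql ^ (-((j : ℤ) - (i : ℤ) - 1)) *
        (∏ m ∈ Finset.Ioo i j, (q ^ (y j - y m + 2) - q ^ (-(2 * (l : ℝ))))) /
          ∏ m ∈ Finset.Ico i j, (q ^ (y j - y m + 2) - 1) := by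
  have hql0 : ql ≠ 0 := by rw [hql]; exact ql_ne q hq hq1 l
  exact key q ql hql0 l y j (j - i) i hij rfl
end
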